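/- The sets K^Y_1(MON_4) and K^N_{1/2}(MON_4) are disjoint: there is no vector μ ∈ [−1,1]^4 that is simultaneously the marginal vector of a distribution D_Y on {−1,1}^4 with Σ_x D_Y(x)·MON_4(x) = 1 and the marginal vector of a distribution D_N on {−1,1}^4 such that for every p ∈ [0,1], Σ_b D_N(b)·E_{a∼Bern(p)^4}[MON_4(b⊙a)] ≤ 1/2. -/

import Mathlib

/-- sign(z) = 1 if z > 0 and 0 otherwise. -/
noncomputable def Rsign (z : ℝ) : ℝ := if 0 < z then 1 else 0

/-- Encoding of {-1,1}: `true ↦ 1`, `false ↦ -1`. -/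
def pm (b : Bool) : ℝ := if b then 1 else -1

/-- The monarchy function MON_k(x) = sign((k-2)·x_1 + x_2 + ⋯ + x_k). -/
noncomputable def MON (k : ℕ) (x : Fin k → Bool) : ℝ :=
  Rsign (∑ i : Fin k, (if (i : ℕ) = 0 then (k : ℝ) - 2 else 1) * pm (x i))

/-- `D` is a probability distribution on {-1,1}^k. -/
def IsDist {k : ℕ} (D : (Fin k → Bool) → ℝ) : Prop :=
  (∀ x, 0 ≤ D x) ∧ (∑ x, D x) = 1

/-- The i-th marginal of `D`: Σ_x D(x)·x_i. -/
noncomputable def marg {k : ℕ} (D : (Fin k → Bool) → ℝ) (i : Fin k) : ℝ :=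
  ∑ x, D x * pm (x i)

/-- E_{a ~ Bern(p)^k}[g(b ⊙ a)], where `a i = true` means a_i = 1 (prob. p). -/
noncomputable def bern {k : ℕ} (p : ℝ) (b : Fin k → Bool) (g : (Fin k → Bool) → ℝ) : ℝ :=
  ∑ a : Fin k → Bool, (∏ i, if a i then p else 1 - p) * g (fun i => b i == a i)

/-!
On the YES side `MON 4 = 1` almost surely, and wherever `MON 4 x = 1` the argument
`2x₀ + x₁ + x₂ + x₃` is a positive odd integer, so `2μ₀ + μ₁ + μ₂ + μ₃ ≥ 1`.

On the NO side, `MON 4 = 1/2 + L/8 + C/8` in Walsh characters, with `L = 3x₀ + x₁ + x₂ + x₃`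
and `C = x₁x₂x₃ − x₀x₁x₂ − x₀x₁x₃ − x₀x₂x₃`. Bernoulli noise multiplies a character of degree `d`
by `(2p − 1)^d`, so the NO condition reads `t·E[L] + t³·E[C] ≤ 0` for all `t ∈ [−1, 1]`; this
forces `E[L] = E[C] = 0`, in particular `3μ₀ + μ₁ + μ₂ + μ₃ = 0`. With the YES bound, `μ₀ ≤ −1`.
But `C ≥ −12 + 4(−x₀ + x₁ + x₂ + x₃)` pointwise, so `0 = E[C] ≥ −12 − 16μ₀`, i.e. `μ₀ ≥ −3/4`.
-/

open Finset

noncomputable def walsh {k : ℕ} (S : Finset (Fin k)) (x : Fin k → Bool) : ℝ := ∏ i ∈ S, pm (x i)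

lemma walsh_singleton {k : ℕ} (i : Fin k) (x : Fin k → Bool) : walsh {i} x = pm (x i) :=
  prod_singleton _ _

section Distributions

variable {k : ℕ} {D : (Fin k → Bool) → ℝ}

lemma IsDist.sum_mul_const (hD : IsDist D) (c : ℝ) : ∑ x, D x * c = c := by
  rw [← sum_mul, hD.2, one_mul]

lemma IsDist.sum_mul_affine (hD : IsDist D) (c : ℝ) (w : Fin k → ℝ) :
    ∑ x, D x * (c + ∑ i, w i * pm (x i)) = c + ∑ i, w i * marg D i := by
  simp only [mul_add, sum_add_distrib, hD.sum_mul_const, marg, mul_sum]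
  rw [sum_comm]
  congr 1
  exact sum_congr rfl fun i _ => sum_congr rfl fun x _ => by ring

lemma sum_mul_le_sum_mul_of_support (hD : ∀ x, 0 ≤ D x) {f g : (Fin k → Bool) → ℝ}
    (h : ∀ x, 0 < D x → f x ≤ g x) : ∑ x, D x * f x ≤ ∑ x, D x * g x :=
  sum_le_sum fun x _ => by
    rcases (hD x).eq_or_lt with hx | hx
    · simp [← hx]
    · exact mul_le_mul_of_nonneg_left (h x hx) hx.le

lemma IsDist.eq_one_of_sum_mul_eq_one (hD : IsDist D) {f : (Fin k → Bool) → ℝ}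
    (hf : ∀ x, f x ≤ 1) (h : ∑ x, D x * f x = 1) (x : Fin k → Bool) (hx : 0 < D x) :
    f x = 1 := by
  have hdefect : ∑ x, D x * (1 - f x) = 0 := by
    simp only [mul_sub, sum_sub_distrib, hD.sum_mul_const, h, sub_self]
  have := (sum_eq_zero_iff_of_nonneg fun x _ =>
    mul_nonneg (hD.1 x) (sub_nonneg.2 (hf x))).1 hdefect x (mem_univ x)
  rcases mul_eq_zero.1 this with h0 | h1
  · exact absurd h0 hx.ne'
  · linarith

end Distributions

section Noise

variable {k : ℕ} (p : ℝ) (b : Fin k → Bool)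

lemma bern_add (f g : (Fin k → Bool) → ℝ) :
    bern p b (fun x => f x + g x) = bern p b f + bern p b g := by
  simp only [bern, mul_add, sum_add_distrib]

lemma bern_sub (f g : (Fin k → Bool) → ℝ) :
    bern p b (fun x => f x - g x) = bern p b f - bern p b g := by
  simp only [bern, mul_sub, sum_sub_distrib]

lemma bern_const_mul (c : ℝ) (f : (Fin k → Bool) → ℝ) :
    bern p b (fun x => c * f x) = c * bern p b f := by
  simp only [bern, mul_sum]
  exact sum_congr rfl fun a _ => by ring

lemma sum_bool_weight_mul_pm_beq (β : Bool) :
    ∑ α : Bool, (if α then p else 1 - p) * pm (β == α) = (2 * p - 1) * pm β := by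
  rw [Fintype.sum_bool]
  cases β <;> simp only [pm, if_true, if_false, beq_self_eq_true, Bool.true_beq, Bool.false_beq,
    Bool.not_true, Bool.false_eq_true] <;> ring

lemma bern_walsh (S : Finset (Fin k)) :
    bern p b (walsh S) = (2 * p - 1) ^ #S * walsh S b := by
  have factor (i : Fin k) :
      ∑ α : Bool, (if α then p else 1 - p) * (if i ∈ S then pm (b i == α) else 1)
        = if i ∈ S then (2 * p - 1) * pm (b i) else 1 := by
    split_ifs
    · exact sum_bool_weight_mul_pm_beq p (b i)
    · simp
  calc bern p b (walsh S)
      = ∑ a : Fin k → Bool,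
          ∏ i, (if a i then p else 1 - p) * (if i ∈ S then pm (b i == a i) else 1) := by
        simp only [bern, walsh, prod_mul_distrib, Fintype.prod_ite_mem]
    _ = ∏ i, ∑ α : Bool,
          (if α then p else 1 - p) * (if i ∈ S then pm (b i == α) else 1) :=
        (Fintype.prod_sum fun i (α : Bool) =>
          (if α then p else 1 - p) * (if i ∈ S then pm (b i == α) else 1)).symm
    _ = ∏ i, if i ∈ S then (2 * p - 1) * pm (b i) else 1 := prod_congr rfl fun i _ => factor i
    _ = (2 * p - 1) ^ #S * walsh S b := by
        rw [Fintype.prod_ite_mem, prod_mul_distrib, prod_const, walsh]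

lemma bern_const (c : ℝ) : bern p b (fun _ => c) = c := by
  have h := bern_walsh p b ∅
  simp only [show walsh (∅ : Finset (Fin k)) = fun _ => 1 from funext fun _ => prod_empty,
    card_empty, pow_zero, one_mul] at h
  rw [show (fun _ : Fin k → Bool => c) = fun _ => c * 1 by simp, bern_const_mul, h, mul_one]

end Noise

lemma MON_le_one (k : ℕ) (x : Fin k → Bool) : MON k x ≤ 1 := by
  unfold MON Rsign
  split_ifs <;> norm_num

noncomputable def mon4Linear (x : Fin 4 → Bool) : ℝ :=
  3 * walsh {0} x + walsh {1} x + walsh {2} x + walsh {3} x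

noncomputable def mon4Cubic (x : Fin 4 → Bool) : ℝ :=
  walsh {1, 2, 3} x - walsh {0, 1, 2} x - walsh {0, 1, 3} x - walsh {0, 2, 3} x

lemma mon4Cubic_eq (x : Fin 4 → Bool) :
    mon4Cubic x = pm (x 1) * pm (x 2) * pm (x 3) - pm (x 0) * pm (x 1) * pm (x 2)
      - pm (x 0) * pm (x 1) * pm (x 3) - pm (x 0) * pm (x 2) * pm (x 3) := by
  simp [mon4Cubic, walsh, mul_assoc]

lemma MON_four_eq_fourier (x : Fin 4 → Bool) :
    MON 4 x = 1 / 2 + mon4Linear x / 8 + mon4Cubic x / 8 := by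
  rw [mon4Cubic_eq]
  simp only [MON, Rsign, mon4Linear, walsh_singleton, Fin.sum_univ_four]
  cases x 0 <;> cases x 1 <;> cases x 2 <;> cases x 3 <;> norm_num [pm]

lemma bern_MON_four (p : ℝ) (b : Fin 4 → Bool) :
    bern p b (MON 4)
      = 1 / 2 + (2 * p - 1) / 8 * mon4Linear b + (2 * p - 1) ^ 3 / 8 * mon4Cubic b := by
  rw [show MON 4 = fun x => 1 / 2 + 1 / 8 * mon4Linear x + 1 / 8 * mon4Cubic x from
    funext fun x => by rw [MON_four_eq_fourier]; ring]
  simp only [mon4Linear, mon4Cubic, bern_add, bern_sub, bern_const_mul, bern_const, bern_walsh,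
    card_singleton, card_insert_of_notMem, mem_insert, mem_singleton, Fin.reduceEq, or_self,
    not_false_eq_true, Nat.reduceAdd, pow_one]
  ring

lemma eq_zero_of_mul_add_mul_pow_three_nonpos {a c : ℝ}
    (h : ∀ t : ℝ, -1 ≤ t → t ≤ 1 → a * t + c * t ^ 3 ≤ 0) : a = 0 ∧ c = 0 := by
  have h1 := h 1 (by norm_num) le_rfl
  have h2 := h (-1) le_rfl (by norm_num)
  have h3 := h (1 / 2) (by norm_num) (by norm_num)
  have h4 := h (-1 / 2) (by norm_num) (by norm_num)
  constructor <;> nlinarith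

section MonarchyFourDist

variable {D : (Fin 4 → Bool) → ℝ}

lemma MON_four_argument_ge_one {x : Fin 4 → Bool} (hx : MON 4 x = 1) :
    1 ≤ 2 * pm (x 0) + pm (x 1) + pm (x 2) + pm (x 3) := by
  revert hx
  simp only [MON, Rsign, Fin.sum_univ_four]
  cases x 0 <;> cases x 1 <;> cases x 2 <;> cases x 3 <;> norm_num [pm]

lemma IsDist.one_le_marg_of_MON_four (hD : IsDist D) (h : ∑ x, D x * MON 4 x = 1) :
    1 ≤ 2 * marg D 0 + marg D 1 + marg D 2 + marg D 3 := by
  have hsupp := hD.eq_one_of_sum_mul_eq_one (MON_le_one 4) h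
  calc 1 = ∑ x, D x * MON 4 x := h.symm
    _ ≤ ∑ x, D x * (2 * pm (x 0) + pm (x 1) + pm (x 2) + pm (x 3)) :=
        sum_mul_le_sum_mul_of_support hD.1 fun x hx => by
          rw [hsupp x hx]
          exact MON_four_argument_ge_one (hsupp x hx)
    _ = 2 * marg D 0 + marg D 1 + marg D 2 + marg D 3 := by
        simpa [Fin.sum_univ_four] using hD.sum_mul_affine 0 ![2, 1, 1, 1]

lemma IsDist.sum_mul_mon4Linear_eq_zero_and_sum_mul_mon4Cubic_eq_zero (hD : IsDist D)
    (h : ∀ p : ℝ, 0 ≤ p → p ≤ 1 → ∑ b, D b * bern p b (MON 4) ≤ 1 / 2) :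
    ∑ b, D b * mon4Linear b = 0 ∧ ∑ b, D b * mon4Cubic b = 0 := by
  apply eq_zero_of_mul_add_mul_pow_three_nonpos
  intro t ht₀ ht₁
  have hp := h ((t + 1) / 2) (by linarith) (by linarith)
  have hexp : ∑ b, D b * bern ((t + 1) / 2) b (MON 4)
      = 1 / 2 + (t / 8 * ∑ b, D b * mon4Linear b + t ^ 3 / 8 * ∑ b, D b * mon4Cubic b) := by
    rw [← hD.sum_mul_const (1 / 2), mul_sum, mul_sum, ← sum_add_distrib, ← sum_add_distrib]
    exact sum_congr rfl fun b _ => by rw [bern_MON_four]; ring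
  rw [hexp] at hp
  linarith

lemma sum_mul_mon4Linear :
    ∑ b, D b * mon4Linear b = 3 * marg D 0 + marg D 1 + marg D 2 + marg D 3 := by
  simp only [mon4Linear, walsh_singleton, marg, mul_sum, ← sum_add_distrib]
  exact sum_congr rfl fun b _ => by ring

/-- Tight at `b = (-1, 1, 1, 1)`, where the cubic part of `MON 4` equals `4`. -/
lemma affine_le_mon4Cubic (b : Fin 4 → Bool) :
    -12 + (-4 * pm (b 0) + 4 * pm (b 1) + 4 * pm (b 2) + 4 * pm (b 3)) ≤ mon4Cubic b := by
  rw [mon4Cubic_eq]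
  cases b 0 <;> cases b 1 <;> cases b 2 <;> cases b 3 <;> norm_num [pm]

lemma IsDist.affine_marg_le_sum_mul_mon4Cubic (hD : IsDist D) :
    -12 + (-4 * marg D 0 + 4 * marg D 1 + 4 * marg D 2 + 4 * marg D 3)
      ≤ ∑ b, D b * mon4Cubic b :=
  calc -12 + (-4 * marg D 0 + 4 * marg D 1 + 4 * marg D 2 + 4 * marg D 3)
      = ∑ b, D b * (-12 + (-4 * pm (b 0) + 4 * pm (b 1) + 4 * pm (b 2) + 4 * pm (b 3))) := by
        simpa [Fin.sum_univ_four] using (hD.sum_mul_affine (-12) ![-4, 4, 4, 4]).symm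
    _ ≤ ∑ b, D b * mon4Cubic b :=
        sum_mul_le_sum_mul_of_support hD.1 fun b _ => affine_le_mon4Cubic b

end MonarchyFourDist

theorem stmt_6 :
    ¬ ∃ μ : Fin 4 → ℝ,
      (∀ i, -1 ≤ μ i ∧ μ i ≤ 1) ∧
      (∃ DY : (Fin 4 → Bool) → ℝ, IsDist DY ∧
        (∑ x, DY x * MON 4 x) = 1 ∧ (∀ i, μ i = marg DY i)) ∧
      (∃ DN : (Fin 4 → Bool) → ℝ, IsDist DN ∧
        (∀ p : ℝ, 0 ≤ p → p ≤ 1 → (∑ b, DN b * bern p b (MON 4)) ≤ 1/2) ∧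
        (∀ i, μ i = marg DN i)) := by
  rintro ⟨μ, -, ⟨DY, hDY, hYes, hYm⟩, ⟨DN, hDN, hNo, hNm⟩⟩
  have hY := hDY.one_le_marg_of_MON_four hYes
  obtain ⟨hLin, hCub⟩ := hDN.sum_mul_mon4Linear_eq_zero_and_sum_mul_mon4Cubic_eq_zero hNo
  have hCubBound := hDN.affine_marg_le_sum_mul_mon4Cubic
  rw [sum_mul_mon4Linear] at hLin
  simp only [← hYm, ← hNm] at hY hLin hCubBound
  linarith
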